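/- arXiv:2004.05145 — 2 statements merged into one kernel-verified Lean document; each statement's English description precedes it below -/
import Mathlib

section
/- The closed interval [(8/9)^3, 8/9] is contained in the fourfold product set 𝒞 · 𝒞 · 𝒞 · 𝒞 = {a·b·c·d : a, b, c, d ∈ 𝒞}. -/
/-!
Rescaling by `9`, it suffices to write every `U ∈ [512, 729]` as `(8 + a)(8 + b)(8 + c)` with
`a, b, c` in the Cantor set, since `(8 + a) / 9` lies in it again. Refine a cube of level-`n`
Cantor intervals containing a preimage of `U` one coordinate at a time: since all factors lie in
`[8, 9]`, crossing the middle-third gap of one factor moves the product less than the other two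
factors can, so one of the two outer thirds still brackets `U`. The lower corners of these cubes
lie in the Cantor set, and a limit point of them, which exists by compactness, hits `U` exactly.
-/

/-- The middle-thirds Cantor set: all reals of the form `∑ tᵢ / 3^i` (`i ≥ 1`)
with each `tᵢ ∈ {0, 2}`. -/
def middleThirdsCantor : Set ℝ :=
  {x : ℝ | ∃ t : ℕ → ℝ, (∀ i, t i = 0 ∨ t i = 2) ∧ x = ∑' i : ℕ, t i / 3 ^ (i + 1)}

theorem middleThirdsCantor_eq_cantorSet : middleThirdsCantor = cantorSet := by
  rw [cantorSet_eq_zero_two_ofDigits]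
  ext x
  constructor
  · rintro ⟨t, ht, rfl⟩
    refine ⟨fun i => if t i = 0 then 0 else 2, fun i => by dsimp only; split_ifs <;> decide,
      ?_⟩
    refine tsum_congr fun i => ?_
    rcases ht i with h | h <;> simp [Real.ofDigitsTerm, h, div_eq_mul_inv]
  · rintro ⟨d, hd, rfl⟩
    refine ⟨fun i => d i, fun i => ?_,
      tsum_congr fun i => by simp [Real.ofDigitsTerm, div_eq_mul_inv]⟩
    have : d i = 0 ∨ d i = 2 := by have := hd i; omega
    rcases this with h | h <;> simp [h]

lemma one_mem_cantorSet : (1 : ℝ) ∈ cantorSet :=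
  Set.mem_iInter.2 fun n => by
    induction n with
    | zero => simp
    | succ n ih => exact Or.inr ⟨1, ih, by norm_num⟩

lemma eight_add_div_nine_mem_cantorSet {x : ℝ} (hx : x ∈ cantorSet) :
    (8 + x) / 9 ∈ cantorSet := by
  have step : ∀ y ∈ cantorSet, (2 + y) / 3 ∈ cantorSet := fun y hy => by
    rw [cantorSet_eq_union_halves]; exact Or.inr ⟨y, hy, rfl⟩
  convert step _ (step x hx) using 1
  ring

/-- The left endpoints of the `2 ^ n` intervals of length `1 / 3 ^ n` that remain after `n` steps
of the middle-thirds construction. -/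
def cantorEndpoints (n : ℕ) : Set ℝ :=
  {x | ∃ t : ℕ → ℝ, (∀ i, t i = 0 ∨ t i = 2) ∧ x = ∑ i ∈ Finset.range n, t i / 3 ^ (i + 1)}

lemma zero_mem_cantorEndpoints_zero : (0 : ℝ) ∈ cantorEndpoints 0 :=
  ⟨0, fun _ => Or.inl rfl, by simp⟩

lemma cantorEndpoints_subset_cantorSet (n : ℕ) : cantorEndpoints n ⊆ cantorSet := by
  rw [← middleThirdsCantor_eq_cantorSet]
  rintro x ⟨t, ht, rfl⟩
  refine ⟨fun i => if i < n then t i else 0, fun i => ?_, ?_⟩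
  · dsimp only; split_ifs
    exacts [ht i, Or.inl rfl]
  · rw [tsum_eq_sum (s := Finset.range n) fun i hi => by simp_all]
    exact Finset.sum_congr rfl fun i hi => by simp_all

lemma mem_cantorEndpoints_succ {n : ℕ} {x : ℝ} (hx : x ∈ cantorEndpoints n) :
    ∀ x' ∈ ({x, x + 2 * (1 / 3 ^ (n + 1))} : Set ℝ), x' ∈ cantorEndpoints (n + 1) := by
  obtain ⟨t, ht, rfl⟩ := hx
  have extend : ∀ d : ℝ, (d = 0 ∨ d = 2) → ∑ i ∈ Finset.range n, t i / 3 ^ (i + 1) +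
      d / 3 ^ (n + 1) ∈ cantorEndpoints (n + 1) := fun d hd => by
    refine ⟨Function.update t n d, fun i => ?_, ?_⟩
    · rcases eq_or_ne i n with rfl | hi
      · simpa using hd
      · simpa [hi] using ht i
    · rw [Finset.sum_range_succ, Function.update_self]
      congr 1
      exact Finset.sum_congr rfl fun i hi =>
        by rw [Function.update_of_ne (Finset.mem_range.1 hi).ne]
  rintro x' (rfl | rfl)
  · simpa using extend 0 (Or.inl rfl)
  · convert extend 2 (Or.inr rfl) using 2
    ring

/-- Crossing the middle-third gap of the factor `X` raises the product by no more than widening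
`Y` and `Z` by at least `v` does; this needs `X (Y + Z) ≥ Y Z`, true as all factors lie in
`[8, 729 / 64]`. -/
lemma third_gap_le {X Y Z v s t : ℝ} (hX : 8 ≤ X) (hY : 8 ≤ Y) (hZ : 8 ≤ Z)
    (hXYZ : X * Y * Z ≤ 729) (hv : 0 ≤ v) (hs : v ≤ s) (ht : v ≤ t) :
    (X + 2 * v) * (Y * Z) ≤ (X + v) * ((Y + s) * (Z + t)) := by
  have hYZ : Y * Z ≤ X * (Y + Z) := by
    nlinarith [mul_le_mul_of_nonneg_right hX (by positivity : 0 ≤ Y * Z)]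
  have hgrow : v * (Y + Z) ≤ (Y + s) * (Z + t) - Y * Z := by
    nlinarith [mul_le_mul_of_nonneg_right hs (by linarith : 0 ≤ Z),
      mul_le_mul_of_nonneg_right ht (by linarith : 0 ≤ Y),
      mul_nonneg (hv.trans hs) (hv.trans ht)]
  nlinarith [mul_le_mul_of_nonneg_left hgrow (by linarith : 0 ≤ X + v),
    mul_le_mul_of_nonneg_left hYZ hv, mul_nonneg hv (by linarith : 0 ≤ Y + Z)]

/-- Refines the first factor to one of its outer thirds and moves it to the last position, so that
three applications refine all three factors. -/
lemma exists_refine_rotate {U a b c v s t : ℝ} (hU : U ≤ 729) (ha : 0 ≤ a) (hb : 0 ≤ b)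
    (hc : 0 ≤ c) (hv : 0 ≤ v) (hs : v ≤ s) (ht : v ≤ t)
    (hlo : (8 + a) * (8 + b) * (8 + c) ≤ U)
    (hhi : U ≤ (8 + a + 3 * v) * (8 + b + s) * (8 + c + t)) :
    ∃ a' ∈ ({a, a + 2 * v} : Set ℝ),
      (8 + b) * (8 + c) * (8 + a') ≤ U ∧ U ≤ (8 + b + s) * (8 + c + t) * (8 + a' + v) := by
  have hgap := third_gap_le (by linarith : 8 ≤ 8 + a) (by linarith : 8 ≤ 8 + b)
    (by linarith : 8 ≤ 8 + c) (hlo.trans hU) hv hs ht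
  by_cases h : (8 + (a + 2 * v)) * (8 + b) * (8 + c) ≤ U
  · exact ⟨a + 2 * v, Or.inr rfl, by linarith, by linarith⟩
  · exact ⟨a, Or.inl rfl, by linarith, by linarith⟩

lemma exists_refined_cube {U : ℝ} (hU : U ≤ 729) {n : ℕ} {a b c : ℝ}
    (ha : a ∈ cantorEndpoints n) (hb : b ∈ cantorEndpoints n) (hc : c ∈ cantorEndpoints n)
    (hlo : (8 + a) * (8 + b) * (8 + c) ≤ U)
    (hhi : U ≤ (8 + a + 1 / 3 ^ n) * (8 + b + 1 / 3 ^ n) * (8 + c + 1 / 3 ^ n)) :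
    ∃ a' ∈ cantorEndpoints (n + 1), ∃ b' ∈ cantorEndpoints (n + 1),
      ∃ c' ∈ cantorEndpoints (n + 1), (8 + a') * (8 + b') * (8 + c') ≤ U ∧
        U ≤ (8 + a' + 1 / 3 ^ (n + 1)) * (8 + b' + 1 / 3 ^ (n + 1)) *
          (8 + c' + 1 / 3 ^ (n + 1)) := by
  set v : ℝ := 1 / 3 ^ (n + 1)
  have hv : 0 ≤ v := by positivity
  have hw : 1 / 3 ^ n = 3 * v := by ring
  have nonneg : ∀ {m x}, x ∈ cantorEndpoints m → 0 ≤ x := fun hx =>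
    (cantorSet_subset_unitInterval (cantorEndpoints_subset_cantorSet _ hx)).1
  obtain ⟨a', ha', hlo₁, hhi₁⟩ := exists_refine_rotate (s := 3 * v) (t := 3 * v) hU
    (nonneg ha) (nonneg hb) (nonneg hc) hv (by linarith) (by linarith) hlo (by rwa [hw] at hhi)
  replace ha' := mem_cantorEndpoints_succ ha a' ha'
  obtain ⟨b', hb', hlo₂, hhi₂⟩ := exists_refine_rotate hU (nonneg hb) (nonneg hc) (nonneg ha')
    hv (by linarith) le_rfl hlo₁ hhi₁
  replace hb' := mem_cantorEndpoints_succ hb b' hb'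
  obtain ⟨c', hc', hlo₃, hhi₃⟩ := exists_refine_rotate hU (nonneg hc) (nonneg ha') (nonneg hb')
    hv le_rfl le_rfl hlo₂ hhi₂
  exact ⟨a', ha', b', hb', c', mem_cantorEndpoints_succ hc c' hc', hlo₃, hhi₃⟩

lemma exists_bracketing_cube {U : ℝ} (h₁ : 512 ≤ U) (h₂ : U ≤ 729) (n : ℕ) :
    ∃ a ∈ cantorEndpoints n, ∃ b ∈ cantorEndpoints n, ∃ c ∈ cantorEndpoints n,
      (8 + a) * (8 + b) * (8 + c) ≤ U ∧
        U ≤ (8 + a + 1 / 3 ^ n) * (8 + b + 1 / 3 ^ n) * (8 + c + 1 / 3 ^ n) := by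
  induction n with
  | zero =>
    exact ⟨0, zero_mem_cantorEndpoints_zero, 0, zero_mem_cantorEndpoints_zero, 0,
      zero_mem_cantorEndpoints_zero, by norm_num [h₁], by norm_num [h₂]⟩
  | succ n ih =>
    obtain ⟨a, ha, b, hb, c, hc, hlo, hhi⟩ := ih
    exact exists_refined_cube h₂ ha hb hc hlo hhi

open Filter Topology in
theorem exists_mem_cantorSet_eight_add_mul_eq {U : ℝ} (h₁ : 512 ≤ U) (h₂ : U ≤ 729) :
    ∃ a ∈ cantorSet, ∃ b ∈ cantorSet, ∃ c ∈ cantorSet, (8 + a) * (8 + b) * (8 + c) = U := by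
  choose a ha b hb c hc hlo hhi using exists_bracketing_cube h₁ h₂
  have hC : ∀ {n x}, x ∈ cantorEndpoints n → x ∈ cantorSet :=
    fun hx => cantorEndpoints_subset_cantorSet _ hx
  obtain ⟨⟨a₀, b₀, c₀⟩, ⟨ha₀, hb₀, hc₀⟩, φ, hφ, hlim⟩ :=
    (isCompact_cantorSet.prod (isCompact_cantorSet.prod isCompact_cantorSet)).tendsto_subseq
      (x := fun n => (a n, b n, c n)) fun n => ⟨hC (ha n), hC (hb n), hC (hc n)⟩
  let F : ℝ × ℝ × ℝ × ℝ → ℝ := fun p =>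
    (8 + p.2.1 + p.1) * (8 + p.2.2.1 + p.1) * (8 + p.2.2.2 + p.1)
  have hF : Continuous F := by fun_prop
  have hw : Tendsto (fun n => (1 : ℝ) / 3 ^ φ n) atTop (𝓝 0) := by
    have := tendsto_inv_atTop_zero.comp
      (tendsto_pow_atTop_atTop_of_one_lt (by norm_num : (1 : ℝ) < 3))
    simpa [Function.comp_def] using this.comp hφ.tendsto_atTop
  have hlo' := (hF.tendsto _).comp (tendsto_const_nhds (x := (0 : ℝ)).prodMk_nhds hlim)
  have hhi' := (hF.tendsto _).comp (hw.prodMk_nhds hlim)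
  refine ⟨a₀, ha₀, b₀, hb₀, c₀, hc₀, le_antisymm ?_ ?_⟩
  · simpa [F] using le_of_tendsto' hlo' fun n => by simpa [F] using hlo (φ n)
  · simpa [F] using ge_of_tendsto' hhi' fun n => hhi (φ n)

theorem Icc_subset_fourfold_cantor_product :
    Set.Icc ((8 / 9 : ℝ) ^ 3) (8 / 9 : ℝ) ⊆
      {x : ℝ | ∃ a ∈ middleThirdsCantor, ∃ b ∈ middleThirdsCantor,
        ∃ c ∈ middleThirdsCantor, ∃ d ∈ middleThirdsCantor, x = a * b * c * d} := by
  rintro x ⟨hx₁, hx₂⟩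
  norm_num at hx₁
  obtain ⟨a, ha, b, hb, c, hc, habc⟩ :=
    exists_mem_cantorSet_eight_add_mul_eq (U := 729 * x) (by linarith) (by linarith)
  simp only [middleThirdsCantor_eq_cantorSet]
  exact ⟨(8 + a) / 9, eight_add_div_nine_mem_cantorSet ha, (8 + b) / 9,
    eight_add_div_nine_mem_cantorSet hb, (8 + c) / 9, eight_add_div_nine_mem_cantorSet hc,
    1, one_mem_cantorSet, by linarith⟩
end

section
/- The set of sums of three squares of elements of the middle-thirds Cantor set misses the open interval (3/9, 4/9); that is, {x_1^2 + x_2^2 + x_3^2 : x_1, x_2, x_3 ∈ 𝒞} ∩ (3/9, 4/9) = ∅. -/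
/-!
Every point of the Cantor set lies in `[0, 1/3] ∪ [2/3, 1]`, according to its first ternary
digit. If all three points lie in `[0, 1/3]` the sum of their squares is at most `3/9`;
otherwise one of the squares alone is at least `4/9`.
-/

open Set

lemma hasSum_two_div_three_pow_succ : HasSum (fun i : ℕ => (2 : ℝ) / 3 ^ (i + 1)) 1 := by
  have h := (hasSum_geometric_of_lt_one (r := (1 / 3 : ℝ)) (by norm_num) (by norm_num)).mul_left
    (2 / 3)
  have hterm : (fun i : ℕ => (2 : ℝ) / 3 ^ (i + 1)) = fun i => 2 / 3 * (1 / 3) ^ i := by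
    ext i
    rw [one_div_pow, pow_succ]
    field_simp
  rwa [← hterm, show (2 : ℝ) / 3 * (1 - 1 / 3)⁻¹ = 1 by norm_num] at h

section TernaryExpansion

variable {t : ℕ → ℝ} (h0 : ∀ i, 0 ≤ t i) (h2 : ∀ i, t i ≤ 2)
include h0 h2

lemma summable_div_three_pow_succ : Summable fun i : ℕ => t i / 3 ^ (i + 1) :=
  hasSum_two_div_three_pow_succ.summable.of_nonneg_of_le (fun i => by have := h0 i; positivity)
    fun i => by gcongr; exact h2 i

lemma tsum_div_three_pow_succ_mem_Icc : ∑' i : ℕ, t i / 3 ^ (i + 1) ∈ Icc (0 : ℝ) 1 :=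
  ⟨tsum_nonneg fun i => by have := h0 i; positivity,
    hasSum_two_div_three_pow_succ.tsum_eq ▸ (summable_div_three_pow_succ h0 h2).tsum_le_tsum
      (fun i => by gcongr; exact h2 i) hasSum_two_div_three_pow_succ.summable⟩

lemma tsum_div_three_pow_succ_eq_head_add_tail : ∑' i : ℕ, t i / 3 ^ (i + 1) =
    t 0 / 3 + (∑' i : ℕ, t (i + 1) / 3 ^ (i + 1)) / 3 := by
  rw [(summable_div_three_pow_succ h0 h2).tsum_eq_zero_add, ← tsum_div_const]
  simp only [pow_succ _ (_ + 1), div_div, zero_add, pow_one]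

end TernaryExpansion

lemma middleThirdsCantor_subset :
    middleThirdsCantor ⊆ Icc 0 (1 / 3) ∪ Icc (2 / 3) 1 := by
  rintro _ ⟨t, ht, rfl⟩
  have h0 : ∀ i, 0 ≤ t i := fun i => by rcases ht i with h | h <;> norm_num [h]
  have h2 : ∀ i, t i ≤ 2 := fun i => by rcases ht i with h | h <;> norm_num [h]
  obtain ⟨htail0, htail1⟩ :=
    tsum_div_three_pow_succ_mem_Icc (fun i => h0 (i + 1)) (fun i => h2 (i + 1))
  rw [tsum_div_three_pow_succ_eq_head_add_tail h0 h2]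
  rcases ht 0 with h | h <;> rw [h]
  · left; constructor <;> linarith
  · right; constructor <;> linarith

lemma sq_add_sq_add_sq_notMem_Ioo {a b c : ℝ} (ha : a ∈ Icc 0 (1 / 3) ∪ Ici (2 / 3))
    (hb : b ∈ Icc 0 (1 / 3) ∪ Ici (2 / 3)) (hc : c ∈ Icc 0 (1 / 3) ∪ Ici (2 / 3)) :
    a ^ 2 + b ^ 2 + c ^ 2 ∉ Ioo (3 / 9) (4 / 9) := by
  rintro ⟨hlo, hhi⟩
  rcases ha with ⟨ha0, ha⟩ | (ha : 2 / 3 ≤ a) <;> rcases hb with ⟨hb0, hb⟩ | (hb : 2 / 3 ≤ b) <;>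
    rcases hc with ⟨hc0, hc⟩ | (hc : 2 / 3 ≤ c) <;> nlinarith

theorem three_squares_of_cantor_misses_Ioo :
    {x : ℝ | ∃ x₁ ∈ middleThirdsCantor, ∃ x₂ ∈ middleThirdsCantor,
        ∃ x₃ ∈ middleThirdsCantor, x = x₁ ^ 2 + x₂ ^ 2 + x₃ ^ 2} ∩
      Set.Ioo (3 / 9 : ℝ) (4 / 9 : ℝ) = ∅ := by
  refine eq_empty_of_forall_notMem ?_
  rintro _ ⟨⟨x₁, h₁, x₂, h₂, x₃, h₃, rfl⟩, hx⟩
  have hC : middleThirdsCantor ⊆ Icc 0 (1 / 3) ∪ Ici (2 / 3) :=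
    middleThirdsCantor_subset.trans (union_subset_union_right _ Icc_subset_Ici_self)
  exact sq_add_sq_add_sq_notMem_Ioo (hC h₁) (hC h₂) (hC h₃) hx
end
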